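/- arXiv:1506.03313 — 5 statements merged into one kernel-verified Lean document; each statement's English description precedes it below -/
import Mathlib

section
/- Let d, n ∈ ℕ with n ≥ 1, σ > 0, ε ≥ 0, C ≥ 0. Let μ be a probability measure on ℝᵈ, let y : Fin n → ℝ, and let f, m : ℝᵈ → (Fin n → ℝ) be measurable functions such that for μ-almost every ψ and every i, |f(ψ)ᵢ − m(ψ)ᵢ| ≤ ε and |2yᵢ − f(ψ)ᵢ − m(ψ)ᵢ| ≤ C. Define the two marginal likelihoods p = ∫ (2πσ²)^{−n/2} exp(−(1/(2σ²)) Σᵢ (yᵢ − f(ψ)ᵢ)²) dμ(ψ) and p̃ = ∫ (2πσ²)^{−n/2} exp(−(1/(2σ²)) Σᵢ (yᵢ − m(ψ)ᵢ)²) dμ(ψ). Then |p − p̃| ≤ (2πσ²)^{−n/2} · n·C·ε/(2σ²). -/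
/-!
Write `p` and `p̃` as the normalising constant times `∫ exp (-‖y - f ψ‖² / (2σ²)) dμ` and
`∫ exp (-‖y - m ψ‖² / (2σ²)) dμ`. Since `exp` is 1-Lipschitz on `(-∞, 0]`, the two integrands
differ by at most `1/(2σ²)` times the difference of the squared residuals, and termwise
`(yᵢ - aᵢ)² - (yᵢ - bᵢ)² = (bᵢ - aᵢ)(2yᵢ - aᵢ - bᵢ)`, which is at most `ε C` in absolute value.
Integrating this almost sure bound against the probability measure `μ` gives the claim.
-/

open Real Finset MeasureTheory

lemma Real.abs_exp_sub_exp_le_of_nonpos {x y : ℝ} (hx : x ≤ 0) (hy : y ≤ 0) :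
    |exp x - exp y| ≤ |x - y| := by
  wlog hyx : y ≤ x generalizing x y
  · rw [abs_sub_comm, abs_sub_comm x]
    exact this hy hx (le_of_not_ge hyx)
  have hexp : exp y = exp x * exp (y - x) := by rw [← exp_add, add_sub_cancel]
  have h_one_add : 1 + (y - x) ≤ exp (y - x) := by linarith [add_one_le_exp (y - x)]
  have hx_le_one : exp x ≤ 1 := exp_le_one_iff.2 hx
  rw [abs_of_nonneg (sub_nonneg.2 (exp_le_exp.2 hyx)), abs_of_nonneg (sub_nonneg.2 hyx), hexp]
  nlinarith [exp_pos x]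

lemma abs_sum_sq_sub_sum_sq_le {ι : Type*} [Fintype ι] {y a b : ι → ℝ} {ε C : ℝ}
    (h : ∀ i, |a i - b i| ≤ ε ∧ |2 * y i - a i - b i| ≤ C) :
    |∑ i, (y i - a i) ^ 2 - ∑ i, (y i - b i) ^ 2| ≤ Fintype.card ι * C * ε := by
  have hterm : ∀ i, |(y i - a i) ^ 2 - (y i - b i) ^ 2| ≤ ε * C := fun i => by
    rw [show (y i - a i) ^ 2 - (y i - b i) ^ 2 = (a i - b i) * -(2 * y i - a i - b i) by ring,
      abs_mul, abs_neg]
    exact mul_le_mul (h i).1 (h i).2 (abs_nonneg _) ((abs_nonneg _).trans (h i).1)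
  calc |∑ i, (y i - a i) ^ 2 - ∑ i, (y i - b i) ^ 2|
      ≤ ∑ i, |(y i - a i) ^ 2 - (y i - b i) ^ 2| := by
        rw [← sum_sub_distrib]; exact abs_sum_le_sum_abs _ _
    _ ≤ ∑ _i : ι, ε * C := sum_le_sum fun i _ => hterm i
    _ = Fintype.card ι * C * ε := by rw [sum_const, card_univ, nsmul_eq_mul]; ring

lemma abs_exp_neg_mul_sum_sq_sub_le {ι : Type*} [Fintype ι] {y a b : ι → ℝ} {c ε C : ℝ}
    (hc : 0 ≤ c) (h : ∀ i, |a i - b i| ≤ ε ∧ |2 * y i - a i - b i| ≤ C) :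
    |exp (-c * ∑ i, (y i - a i) ^ 2) - exp (-c * ∑ i, (y i - b i) ^ 2)| ≤
      c * (Fintype.card ι * C * ε) := by
  have hnonpos : ∀ w : ι → ℝ, -c * ∑ i, (y i - w i) ^ 2 ≤ 0 := fun w =>
    mul_nonpos_of_nonpos_of_nonneg (neg_nonpos.2 hc) (sum_nonneg fun i _ => sq_nonneg _)
  calc _ ≤ |-c * ∑ i, (y i - a i) ^ 2 - -c * ∑ i, (y i - b i) ^ 2| :=
        abs_exp_sub_exp_le_of_nonpos (hnonpos a) (hnonpos b)
    _ = c * |∑ i, (y i - a i) ^ 2 - ∑ i, (y i - b i) ^ 2| := by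
        rw [← mul_sub, abs_mul, abs_neg, abs_of_nonneg hc]
    _ ≤ c * (Fintype.card ι * C * ε) := mul_le_mul_of_nonneg_left (abs_sum_sq_sub_sum_sq_le h) hc

section Integral

variable {α : Type*} [MeasurableSpace α] {μ : Measure α}

lemma integrable_exp_of_nonpos [IsFiniteMeasure μ] {g : α → ℝ} (hg : AEStronglyMeasurable g μ)
    (hle : ∀ᵐ x ∂μ, g x ≤ 0) : Integrable (fun x => exp (g x)) μ :=
  Integrable.of_bound (continuous_exp.comp_aestronglyMeasurable hg) 1 <| hle.mono fun x hx => by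
    rw [norm_of_nonneg (exp_nonneg _)]; exact exp_le_one_iff.2 hx

lemma abs_integral_sub_integral_le [IsProbabilityMeasure μ] {g h : α → ℝ} {K : ℝ}
    (hg : Integrable g μ) (hh : Integrable h μ) (hK : ∀ᵐ x ∂μ, |g x - h x| ≤ K) :
    |∫ x, g x ∂μ - ∫ x, h x ∂μ| ≤ K := by
  rw [← integral_sub hg hh]
  simpa using norm_integral_le_of_norm_le_const (μ := μ) (f := fun x => g x - h x) hK

end Integral

theorem stmt_1_general (d n : ℕ) (σ ε C : ℝ)
    (μ : Measure (Fin d → ℝ)) [IsProbabilityMeasure μ]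
    (y : Fin n → ℝ) (f m : (Fin d → ℝ) → (Fin n → ℝ))
    (hf : Measurable f) (hm : Measurable m)
    (hbound : ∀ᵐ ψ ∂μ, ∀ i, |f ψ i - m ψ i| ≤ ε ∧ |2 * y i - f ψ i - m ψ i| ≤ C) :
    |(∫ ψ, (2 * Real.pi * σ ^ 2) ^ (-(n : ℝ) / 2) *
          Real.exp (-(1 / (2 * σ ^ 2)) * ∑ i, (y i - f ψ i) ^ 2) ∂μ) -
      (∫ ψ, (2 * Real.pi * σ ^ 2) ^ (-(n : ℝ) / 2) *
          Real.exp (-(1 / (2 * σ ^ 2)) * ∑ i, (y i - m ψ i) ^ 2) ∂μ)| ≤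
    (2 * Real.pi * σ ^ 2) ^ (-(n : ℝ) / 2) * (n * C * ε / (2 * σ ^ 2)) := by
  have hc : 0 ≤ 1 / (2 * σ ^ 2) := by positivity
  have hA : 0 ≤ (2 * Real.pi * σ ^ 2) ^ (-(n : ℝ) / 2) := by positivity
  have hint : ∀ w : (Fin d → ℝ) → (Fin n → ℝ), Measurable w →
      Integrable (fun ψ => exp (-(1 / (2 * σ ^ 2)) * ∑ i, (y i - w ψ i) ^ 2)) μ :=
    fun w hw => integrable_exp_of_nonpos (by fun_prop) <| ae_of_all _ fun ψ =>
      mul_nonpos_of_nonpos_of_nonneg (neg_nonpos.2 hc) (sum_nonneg fun i _ => sq_nonneg _)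
  rw [integral_const_mul, integral_const_mul, ← mul_sub, abs_mul, abs_of_nonneg hA]
  gcongr
  calc _ ≤ 1 / (2 * σ ^ 2) * (Fintype.card (Fin n) * C * ε) :=
        abs_integral_sub_integral_le (hint f hf) (hint m hm)
          (hbound.mono fun ψ hψ => abs_exp_neg_mul_sum_sq_sub_le hc hψ)
    _ = n * C * ε / (2 * σ ^ 2) := by rw [Fintype.card_fin, one_div_mul_eq_div]

theorem stmt_1 (d n : ℕ) (hn : 1 ≤ n) (σ ε C : ℝ) (hσ : 0 < σ) (hε : 0 ≤ ε) (hC : 0 ≤ C)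
    (μ : Measure (Fin d → ℝ)) [IsProbabilityMeasure μ]
    (y : Fin n → ℝ) (f m : (Fin d → ℝ) → (Fin n → ℝ))
    (hf : Measurable f) (hm : Measurable m)
    (hbound : ∀ᵐ ψ ∂μ, ∀ i, |f ψ i - m ψ i| ≤ ε ∧ |2 * y i - f ψ i - m ψ i| ≤ C) :
    |(∫ ψ, (2 * Real.pi * σ ^ 2) ^ (-(n : ℝ) / 2) *
          Real.exp (-(1 / (2 * σ ^ 2)) * ∑ i, (y i - f ψ i) ^ 2) ∂μ) -
      (∫ ψ, (2 * Real.pi * σ ^ 2) ^ (-(n : ℝ) / 2) *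
          Real.exp (-(1 / (2 * σ ^ 2)) * ∑ i, (y i - m ψ i) ^ 2) ∂μ)| ≤
    (2 * Real.pi * σ ^ 2) ^ (-(n : ℝ) / 2) * (n * C * ε / (2 * σ ^ 2)) :=
  stmt_1_general d n σ ε C μ y f m hf hm hbound
end

section
/- Let n ≥ 1, σ > 0, and let C be an n×n real symmetric positive semidefinite matrix. Then 0 ≤ σ^{−n} − det(σ²Iₙ + C)^{−1/2} ≤ σ^{−n} · tr(C)/(2σ²). -/
/-!
Diagonalising `C`, with eigenvalues `λᵢ ≥ 0`, gives
`det (σ² I + C) ^ (-1/2) = σ⁻ⁿ ∏ (1 + yᵢ) ^ (-1/2)` where `yᵢ = λᵢ / σ²` and `∑ yᵢ = tr C / σ²`.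
The product equals `exp (-u/2)` with `0 ≤ u = ∑ log (1 + yᵢ) ≤ ∑ yᵢ`, and `0 ≤ 1 - exp (-u/2) ≤ u/2`.
-/

open Finset

theorem Matrix.IsHermitian.det_smul_one_add {𝕜 n : Type*} [RCLike 𝕜] [Fintype n] [DecidableEq n]
    {A : Matrix n n 𝕜} (hA : A.IsHermitian) (t : ℝ) :
    (t • 1 + A).det = ∏ i, ((t + hA.eigenvalues i : ℝ) : 𝕜) := by
  conv_lhs => rw [hA.spectral_theorem, ← algebraMap_smul 𝕜 t]
  rw [← map_one (Unitary.conjStarAlgAut 𝕜 _ hA.eigenvectorUnitary), ← map_smul, ← map_add,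
    Unitary.conjStarAlgAut_apply, det_mul_right_comm,
    Unitary.mul_star_self_of_mem hA.eigenvectorUnitary.prop, one_mul,
    smul_one_eq_diagonal, diagonal_add, det_diagonal]
  simp

theorem prod_one_add_rpow_neg_le_one {ι : Type*} (s : Finset ι) {y : ι → ℝ}
    (hy : ∀ i ∈ s, 0 ≤ y i) {p : ℝ} (hp : 0 ≤ p) :
    ∏ i ∈ s, (1 + y i) ^ (-p) ≤ 1 :=
  prod_le_one (fun i hi => by have := hy i hi; positivity) fun i hi =>
    Real.rpow_le_one_of_one_le_of_nonpos (by linarith [hy i hi]) (neg_nonpos.mpr hp)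

theorem one_sub_prod_one_add_rpow_neg_le {ι : Type*} (s : Finset ι) {y : ι → ℝ}
    (hy : ∀ i ∈ s, 0 ≤ y i) {p : ℝ} (hp : 0 ≤ p) :
    1 - ∏ i ∈ s, (1 + y i) ^ (-p) ≤ p * ∑ i ∈ s, y i := by
  have hpos : ∀ i ∈ s, 0 < 1 + y i := fun i hi => by linarith [hy i hi]
  have hexp : ∏ i ∈ s, (1 + y i) ^ (-p) = Real.exp (-(p * ∑ i ∈ s, Real.log (1 + y i))) := by
    rw [mul_sum, ← sum_neg_distrib, Real.exp_sum]
    refine prod_congr rfl fun i hi => ?_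
    rw [Real.rpow_def_of_pos (hpos i hi)]
    ring_nf
  have hlog : ∑ i ∈ s, Real.log (1 + y i) ≤ ∑ i ∈ s, y i :=
    sum_le_sum fun i hi => by linarith [Real.log_le_sub_one_of_pos (hpos i hi)]
  rw [hexp]
  linarith [Real.add_one_le_exp (-(p * ∑ i ∈ s, Real.log (1 + y i))),
    mul_le_mul_of_nonneg_left hlog hp]

theorem Matrix.PosSemidef.det_sq_smul_one_add_rpow_neg_half {ι : Type*} [Fintype ι]
    [DecidableEq ι] {σ : ℝ} (hσ : 0 < σ) {C : Matrix ι ι ℝ} (hC : C.PosSemidef) :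
    (σ ^ 2 • (1 : Matrix ι ι ℝ) + C).det ^ (-(1 : ℝ) / 2) =
      σ ^ (-(Fintype.card ι : ℝ)) * ∏ i, (1 + hC.1.eigenvalues i / σ ^ 2) ^ (-(1 : ℝ) / 2) := by
  have hfactor : ∀ i, σ ^ 2 + hC.1.eigenvalues i = σ ^ 2 * (1 + hC.1.eigenvalues i / σ ^ 2) :=
    fun i => by field_simp
  have hσ' : (σ ^ 2) ^ (-(1 : ℝ) / 2) = σ⁻¹ := by
    rw [← Real.rpow_natCast, ← Real.rpow_mul hσ.le]
    norm_num [Real.rpow_neg_one]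
  have hterm : ∀ i, (σ ^ 2 * (1 + hC.1.eigenvalues i / σ ^ 2)) ^ (-(1 : ℝ) / 2) =
      σ⁻¹ * (1 + hC.1.eigenvalues i / σ ^ 2) ^ (-(1 : ℝ) / 2) := fun i => by
    rw [Real.mul_rpow (sq_nonneg σ) (by have := hC.eigenvalues_nonneg i; positivity), hσ']
  simp only [hC.1.det_smul_one_add, RCLike.ofReal_real_eq_id, id, hfactor]
  rw [← Real.finsetProd_rpow _ _ fun i _ => by have := hC.eigenvalues_nonneg i; positivity]
  simp only [hterm, prod_mul_distrib, prod_const, card_univ,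
    Real.rpow_neg hσ.le, Real.rpow_natCast, inv_pow]

theorem stmt_4_general (n : ℕ) (σ : ℝ) (hσ : 0 < σ)
    (C : Matrix (Fin n) (Fin n) ℝ) (hC : C.PosSemidef) :
    0 ≤ σ ^ (-(n : ℝ)) -
        ((σ ^ 2 • (1 : Matrix (Fin n) (Fin n) ℝ) + C).det) ^ (-(1 : ℝ) / 2) ∧
      σ ^ (-(n : ℝ)) -
          ((σ ^ 2 • (1 : Matrix (Fin n) (Fin n) ℝ) + C).det) ^ (-(1 : ℝ) / 2) ≤
        σ ^ (-(n : ℝ)) * (C.trace / (2 * σ ^ 2)) := by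
  have hy : ∀ i ∈ univ, 0 ≤ hC.1.eigenvalues i / σ ^ 2 :=
    fun i _ => div_nonneg (hC.eigenvalues_nonneg i) (sq_nonneg σ)
  have htrace : C.trace / (2 * σ ^ 2) = 1 / 2 * ∑ i, hC.1.eigenvalues i / σ ^ 2 := by
    rw [hC.1.trace_eq_sum_eigenvalues, ← sum_div]
    simp only [RCLike.ofReal_real_eq_id, id]
    ring
  have hσn : 0 ≤ σ ^ (-(n : ℝ)) := by positivity
  rw [hC.det_sq_smul_one_add_rpow_neg_half hσ, Fintype.card_fin, htrace, ← mul_one_sub, neg_div]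
  exact ⟨mul_nonneg hσn (sub_nonneg.mpr (prod_one_add_rpow_neg_le_one _ hy (by norm_num))),
    mul_le_mul_of_nonneg_left (one_sub_prod_one_add_rpow_neg_le _ hy (by norm_num)) hσn⟩

theorem stmt_4 (n : ℕ) (hn : 1 ≤ n) (σ : ℝ) (hσ : 0 < σ)
    (C : Matrix (Fin n) (Fin n) ℝ) (hC : C.PosSemidef) :
    0 ≤ σ ^ (-(n : ℝ)) -
        ((σ ^ 2 • (1 : Matrix (Fin n) (Fin n) ℝ) + C).det) ^ (-(1 : ℝ) / 2) ∧
      σ ^ (-(n : ℝ)) -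
          ((σ ^ 2 • (1 : Matrix (Fin n) (Fin n) ℝ) + C).det) ^ (-(1 : ℝ) / 2) ≤
        σ ^ (-(n : ℝ)) * (C.trace / (2 * σ ^ 2)) :=
  stmt_4_general n σ hσ C hC
end

section
/- Let n ≥ 1, σ > 0, let C be an n×n real symmetric positive semidefinite matrix, and let v ∈ ℝⁿ. Then 0 ≤ vᵀ(σ²Iₙ)⁻¹v − vᵀ(σ²Iₙ + C)⁻¹v ≤ ‖v‖² · tr(C)/σ⁴. -/
/-!
Put `u = (s • 1 + C)⁻¹ v` and `w = C u`, so that `v = s u + w`. Then the gap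
`s⁻¹ v ⬝ v - v ⬝ u` equals `u ⬝ C u + s⁻¹ w ⬝ w ≥ 0`, while `s⁻² v ⬝ C v` exceeds it by
`s⁻¹ w ⬝ w + s⁻² w ⬝ C w ≥ 0`. Finally `v ⬝ C v ≤ ‖v‖² tr C`: write `C = Bᵀ B` and apply
Cauchy–Schwarz to each row of `B`.
-/

open Matrix

variable {ι : Type*} [Fintype ι]

theorem Matrix.PosSemidef.dotProduct_mulVec_le_dotProduct_mul_trace {C : Matrix ι ι ℝ}
    (hC : C.PosSemidef) (v : ι → ℝ) : v ⬝ᵥ (C *ᵥ v) ≤ (v ⬝ᵥ v) * C.trace := by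
  obtain ⟨B, rfl⟩ : ∃ B : Matrix ι ι ℝ, C = Bᴴ * B := by
    classical
    open scoped MatrixOrder in exact CStarAlgebra.nonneg_iff_eq_star_mul_self.mp hC.nonneg
  have hquad : v ⬝ᵥ ((Bᴴ * B) *ᵥ v) = ∑ i, (B i ⬝ᵥ v) ^ 2 := by
    rw [← mulVec_mulVec, dotProduct_mulVec, conjTranspose_eq_transpose_of_trivial,
      vecMul_transpose, dotProduct]
    simp only [mulVec, sq]
  have htrace : (Bᴴ * B).trace = ∑ i, B i ⬝ᵥ B i := by
    rw [trace_mul_comm, conjTranspose_eq_transpose_of_trivial]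
    simp only [trace, diag, mul_apply, transpose_apply, dotProduct]
  rw [hquad, htrace, Finset.mul_sum]
  refine Finset.sum_le_sum fun i _ => ?_
  simpa only [dotProduct, sq, mul_comm (∑ j, v j * v j)] using
    Finset.sum_mul_sq_le_sq_mul_sq Finset.univ (B i) v

section Gap

variable {s : ℝ} {u w v : ι → ℝ}

theorem inv_mul_dotProduct_self_sub_dotProduct (hs : s ≠ 0) (hv : v = s • u + w) :
    s⁻¹ * (v ⬝ᵥ v) - v ⬝ᵥ u = u ⬝ᵥ w + s⁻¹ * (w ⬝ᵥ w) := by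
  subst hv
  simp only [dotProduct_add, add_dotProduct, dotProduct_smul, smul_dotProduct, smul_eq_mul,
    dotProduct_comm w u]
  field_simp
  ring

theorem inv_sq_mul_dotProduct_mulVec {C : Matrix ι ι ℝ} (hC : C.IsHermitian) (hs : s ≠ 0)
    (hw : w = C *ᵥ u) (hv : v = s • u + w) :
    (s ^ 2)⁻¹ * (v ⬝ᵥ (C *ᵥ v)) =
      u ⬝ᵥ w + 2 * s⁻¹ * (w ⬝ᵥ w) + (s ^ 2)⁻¹ * (w ⬝ᵥ (C *ᵥ w)) := by
  have hsymm : u ⬝ᵥ (C *ᵥ w) = w ⬝ᵥ w := by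
    rw [dotProduct_mulVec, ← mulVec_transpose, ← conjTranspose_eq_transpose_of_trivial, hC.eq,
      ← hw, dotProduct_comm]
  subst hv
  simp only [mulVec_add, mulVec_smul, ← hw, dotProduct_add, add_dotProduct, dotProduct_smul,
    smul_dotProduct, smul_eq_mul, hsymm]
  field_simp
  ring

variable [DecidableEq ι]

theorem Matrix.PosSemidef.dotProduct_inv_smul_one_add_mulVec_bounds {C : Matrix ι ι ℝ}
    (hC : C.PosSemidef) (hs : 0 < s) (v : ι → ℝ) :
    0 ≤ s⁻¹ * (v ⬝ᵥ v) - v ⬝ᵥ ((s • 1 + C)⁻¹ *ᵥ v) ∧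
      s⁻¹ * (v ⬝ᵥ v) - v ⬝ᵥ ((s • 1 + C)⁻¹ *ᵥ v) ≤ (s ^ 2)⁻¹ * (v ⬝ᵥ (C *ᵥ v)) := by
  set u := (s • 1 + C)⁻¹ *ᵥ v
  set w := C *ᵥ u with hw
  have hA : (s • 1 + C).PosDef := (PosDef.one.smul hs).add_posSemidef hC
  have hv : v = s • u + w := by
    have hAu : (s • 1 + C) *ᵥ u = v := by
      rw [mulVec_mulVec, mul_nonsing_inv _ ((isUnit_iff_isUnit_det _).mp hA.isUnit), one_mulVec]
    rw [← hAu, add_mulVec, smul_mulVec, one_mulVec]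
  have huw : 0 ≤ u ⬝ᵥ w := by simpa using hC.dotProduct_mulVec_nonneg u
  have hww : 0 ≤ w ⬝ᵥ w := by simpa using dotProduct_star_self_nonneg w
  have hwCw : 0 ≤ w ⬝ᵥ (C *ᵥ w) := by simpa using hC.dotProduct_mulVec_nonneg w
  rw [inv_mul_dotProduct_self_sub_dotProduct hs.ne' hv,
    inv_sq_mul_dotProduct_mulVec hC.isHermitian hs.ne' hw hv]
  constructor <;> nlinarith [inv_pos.mpr hs, inv_pos.mpr (pow_pos hs 2)]

end Gap

theorem stmt_7_general (n : ℕ) (σ : ℝ) (hσ : 0 < σ)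
    (C : Matrix (Fin n) (Fin n) ℝ) (hC : C.PosSemidef)
    (v : EuclideanSpace ℝ (Fin n)) :
    0 ≤ v ⬝ᵥ ((σ ^ 2 • (1 : Matrix (Fin n) (Fin n) ℝ))⁻¹ *ᵥ v) -
        v ⬝ᵥ ((σ ^ 2 • (1 : Matrix (Fin n) (Fin n) ℝ) + C)⁻¹ *ᵥ v) ∧
      v ⬝ᵥ ((σ ^ 2 • (1 : Matrix (Fin n) (Fin n) ℝ))⁻¹ *ᵥ v) -
          v ⬝ᵥ ((σ ^ 2 • (1 : Matrix (Fin n) (Fin n) ℝ) + C)⁻¹ *ᵥ v) ≤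
        ‖v‖ ^ 2 * C.trace / σ ^ 4 := by
  have hσ2 : 0 < σ ^ 2 := by positivity
  have hinv : (σ ^ 2 • (1 : Matrix (Fin n) (Fin n) ℝ))⁻¹ = (σ ^ 2)⁻¹ • 1 :=
    inv_eq_right_inv (by simp [smul_smul, hσ2.ne'])
  have hnorm : ‖v‖ ^ 2 = v ⬝ᵥ v := by
    rw [EuclideanSpace.real_norm_sq_eq]
    simp only [dotProduct, sq]
  obtain ⟨hlower, hupper⟩ := hC.dotProduct_inv_smul_one_add_mulVec_bounds hσ2 v
  rw [hinv, smul_mulVec, one_mulVec, dotProduct_smul, smul_eq_mul]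
  refine ⟨hlower, hupper.trans ?_⟩
  calc ((σ ^ 2) ^ 2)⁻¹ * (v ⬝ᵥ (C *ᵥ v)) ≤ ((σ ^ 2) ^ 2)⁻¹ * ((v ⬝ᵥ v) * C.trace) := by
        gcongr
        exact hC.dotProduct_mulVec_le_dotProduct_mul_trace v
    _ = ‖v‖ ^ 2 * C.trace / σ ^ 4 := by
        rw [hnorm]
        ring

theorem stmt_7 (n : ℕ) (hn : 1 ≤ n) (σ : ℝ) (hσ : 0 < σ)
    (C : Matrix (Fin n) (Fin n) ℝ) (hC : C.PosSemidef)
    (v : EuclideanSpace ℝ (Fin n)) :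
    0 ≤ v ⬝ᵥ ((σ ^ 2 • (1 : Matrix (Fin n) (Fin n) ℝ))⁻¹ *ᵥ v) -
        v ⬝ᵥ ((σ ^ 2 • (1 : Matrix (Fin n) (Fin n) ℝ) + C)⁻¹ *ᵥ v) ∧
      v ⬝ᵥ ((σ ^ 2 • (1 : Matrix (Fin n) (Fin n) ℝ))⁻¹ *ᵥ v) -
          v ⬝ᵥ ((σ ^ 2 • (1 : Matrix (Fin n) (Fin n) ℝ) + C)⁻¹ *ᵥ v) ≤
        ‖v‖ ^ 2 * C.trace / σ ^ 4 :=
  stmt_7_general n σ hσ C hC v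
end

section
/- Let n ≥ 1, σ > 0, y, μ ∈ ℝⁿ, and let C be an n×n real symmetric positive semidefinite matrix. Define the Gaussian densities g_C(y) = (2π)^{−n/2} det(σ²Iₙ + C)^{−1/2} exp(−½ (y−μ)ᵀ(σ²Iₙ + C)⁻¹(y−μ)) and g₀(y) = (2πσ²)^{−n/2} exp(−‖y−μ‖²/(2σ²)). Then |g_C(y) − g₀(y)| ≤ (2π)^{−n/2} σ^{−n} · (tr(C)/(2σ²)) · (1 + ‖y−μ‖²/σ²). -/
/-!
Diagonalise `C = U diag(d) Uᵀ` with `d ≥ 0`. Then `det (σ² I + C) = ∏ (σ² + dᵢ)` lies between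
`σ^(2n)` and `σ^(2n) exp (tr C / σ²)`, so its inverse square root lies between
`σ^(-n) (1 - tr C / (2σ²))` and `σ^(-n)`. In the coordinates `c = Uᵀ (y - μ)` the quadratic form
`∑ cᵢ² / (σ² + dᵢ)` lies between `‖c‖²/σ² - tr C ‖c‖²/σ⁴` and `‖c‖²/σ²`, and `exp` is 1-Lipschitz
on `(-∞, 0]`, so the two exponentials differ by at most `tr C ‖y - μ‖² / (2σ⁴)`. The error in the
prefactor and the error in the exponential add up to the bound.
-/

open Matrix Real

namespace Matrix

variable {ι : Type*} [Fintype ι]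

lemma dotProduct_conj_mulVec (U M : Matrix ι ι ℝ) (x : ι → ℝ) :
    x ⬝ᵥ ((U * M * star U) *ᵥ x) = (star U *ᵥ x) ⬝ᵥ (M *ᵥ (star U *ᵥ x)) := by
  rw [← mulVec_mulVec, ← mulVec_mulVec, dotProduct_mulVec, ← mulVec_transpose,
    star_eq_conjTranspose, conjTranspose_eq_transpose_of_trivial]

variable [DecidableEq ι]

lemma dotProduct_diagonal_mulVec (v x : ι → ℝ) :
    x ⬝ᵥ (diagonal v *ᵥ x) = ∑ i, v i * x i ^ 2 := by
  simp only [dotProduct, mulVec_diagonal]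
  exact Finset.sum_congr rfl fun i _ => by ring

lemma sum_sq_mulVec_of_mem_unitaryGroup {U : Matrix ι ι ℝ} (hU : U ∈ unitaryGroup ι ℝ)
    (x : ι → ℝ) : ∑ i, (U *ᵥ x) i ^ 2 = ∑ i, x i ^ 2 := by
  have h : (U *ᵥ x) ⬝ᵥ (U *ᵥ x) = x ⬝ᵥ x := by
    rw [dotProduct_mulVec, vecMul_mulVec, ← conjTranspose_eq_transpose_of_trivial,
      ← star_eq_conjTranspose, Unitary.star_mul_self_of_mem hU, vecMul_one]
  simpa only [dotProduct, sq] using h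

lemma det_conj_of_mem_unitaryGroup {U : Matrix ι ι ℝ} (hU : U ∈ unitaryGroup ι ℝ)
    (M : Matrix ι ι ℝ) : (U * M * star U).det = M.det := by
  rw [det_mul, mul_comm, det_mul, ← mul_assoc, ← det_mul, Unitary.star_mul_self_of_mem hU,
    det_one, one_mul]

lemma inv_conj_of_mem_unitaryGroup {U : Matrix ι ι ℝ} (hU : U ∈ unitaryGroup ι ℝ)
    (M : Matrix ι ι ℝ) : (U * M * star U)⁻¹ = U * M⁻¹ * star U := by
  have hU_inv : U⁻¹ = star U := inv_eq_left_inv (Unitary.star_mul_self_of_mem hU)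
  have hstar_inv : (star U)⁻¹ = U := inv_eq_left_inv (Unitary.mul_star_self_of_mem hU)
  rw [mul_inv_rev, mul_inv_rev, hU_inv, hstar_inv, mul_assoc]

lemma inv_diagonal_of_ne_zero {v : ι → ℝ} (hv : ∀ i, v i ≠ 0) :
    (diagonal v)⁻¹ = diagonal v⁻¹ := by
  refine inv_eq_left_inv ?_
  rw [diagonal_mul_diagonal, ← diagonal_one]
  exact congrArg diagonal (funext fun i => inv_mul_cancel₀ (hv i))

namespace IsHermitian

variable {C : Matrix ι ι ℝ} (hC : C.IsHermitian)

lemma smul_one_add_eq_conj_diagonal (s : ℝ) :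
    s • 1 + C = (hC.eigenvectorUnitary : Matrix ι ι ℝ) *
      diagonal (fun i => s + hC.eigenvalues i) * star (hC.eigenvectorUnitary : Matrix ι ι ℝ) := by
  rw [← diagonal_add, ← smul_one_eq_diagonal, mul_add, add_mul, mul_smul_comm, mul_one, smul_mul,
    Unitary.mul_star_self_of_mem hC.eigenvectorUnitary.2]
  conv_lhs => rw [hC.spectral_theorem]
  simp

lemma det_smul_one_add_s8 (s : ℝ) : (s • 1 + C).det = ∏ i, (s + hC.eigenvalues i) := by
  rw [hC.smul_one_add_eq_conj_diagonal, det_conj_of_mem_unitaryGroup hC.eigenvectorUnitary.2,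
    det_diagonal]

lemma dotProduct_inv_smul_one_add_mulVec {s : ℝ} (hs : ∀ i, s + hC.eigenvalues i ≠ 0)
    (x : ι → ℝ) :
    x ⬝ᵥ ((s • 1 + C)⁻¹ *ᵥ x) =
      ∑ i, (s + hC.eigenvalues i)⁻¹ * (star (hC.eigenvectorUnitary : Matrix ι ι ℝ) *ᵥ x) i ^ 2 := by
  rw [hC.smul_one_add_eq_conj_diagonal, inv_conj_of_mem_unitaryGroup hC.eigenvectorUnitary.2,
    inv_diagonal_of_ne_zero hs, dotProduct_conj_mulVec, dotProduct_diagonal_mulVec]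
  rfl

end IsHermitian

end Matrix

namespace Real

lemma exp_neg_sub_exp_neg_le {u v : ℝ} (hu : 0 ≤ u) (huv : u ≤ v) :
    exp (-u) - exp (-v) ≤ v - u := by
  have hexp_le_one : exp (-u) ≤ 1 := exp_le_one_iff.mpr (by linarith)
  have hsplit : exp (-v) = exp (-u) * exp (-(v - u)) := by rw [← exp_add]; ring_nf
  have htangent : 1 - (v - u) ≤ exp (-(v - u)) := one_sub_le_exp_neg _
  rw [hsplit]
  nlinarith [exp_pos (-u)]

lemma mul_one_sub_half_le_rpow_neg_half {a P t : ℝ} (ha : 0 < a) (hP : 0 < P)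
    (hPa : P ≤ a * exp t) : a ^ (-(1 : ℝ) / 2) * (1 - t / 2) ≤ P ^ (-(1 : ℝ) / 2) :=
  calc a ^ (-(1 : ℝ) / 2) * (1 - t / 2)
      ≤ a ^ (-(1 : ℝ) / 2) * exp (-(t / 2)) := by
        gcongr
        exact one_sub_le_exp_neg _
    _ = (a * exp t) ^ (-(1 : ℝ) / 2) := by
        rw [mul_rpow ha.le (exp_pos t).le, ← exp_mul]
        ring_nf
    _ ≤ P ^ (-(1 : ℝ) / 2) := rpow_le_rpow_of_nonpos hP hPa (by norm_num)

lemma sq_rpow_div_two {σ : ℝ} (hσ : 0 ≤ σ) (x : ℝ) : (σ ^ 2) ^ (x / 2) = σ ^ x := by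
  rw [← rpow_natCast, ← rpow_mul hσ]
  push_cast
  ring_nf

end Real

lemma abs_mul_sub_mul_le {m p a E₀ E₁ δ : ℝ} (hm : 0 ≤ m) (hp : m * (1 - a) ≤ p) (hpm : p ≤ m)
    (hE₀ : 0 ≤ E₀) (hE : E₀ ≤ E₁) (hE₁ : E₁ ≤ 1) (hδ : E₁ - E₀ ≤ δ) :
    |p * E₁ - m * E₀| ≤ m * (a + δ) := by
  rw [abs_le]
  constructor <;> nlinarith

lemma inv_sub_inv_add_le {s e : ℝ} (hs : 0 < s) (he : 0 ≤ e) : s⁻¹ - (s + e)⁻¹ ≤ e / s ^ 2 := by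
  rw [inv_sub_inv hs.ne' (add_pos_of_pos_of_nonneg hs he).ne', add_sub_cancel_left, sq]
  gcongr
  linarith

section

variable {ι : Type*} [Fintype ι] {s : ℝ} {d : ι → ℝ}

lemma pow_card_le_prod_add (hs : 0 ≤ s) (hd : ∀ i, 0 ≤ d i) :
    s ^ Fintype.card ι ≤ ∏ i, (s + d i) := by
  rw [← Finset.card_univ, ← Finset.prod_const]
  exact Finset.prod_le_prod (fun _ _ => hs) fun i _ => le_add_of_nonneg_right (hd i)

lemma prod_add_le_pow_mul_exp (hs : 0 < s) (hd : ∀ i, 0 ≤ d i) :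
    ∏ i, (s + d i) ≤ s ^ Fintype.card ι * exp ((∑ i, d i) / s) := by
  rw [Finset.sum_div, exp_sum, ← Finset.card_univ, ← Finset.prod_const,
    ← Finset.prod_mul_distrib]
  refine Finset.prod_le_prod (fun i _ => by linarith [hd i]) fun i _ => ?_
  calc s + d i = s * (d i / s + 1) := by field_simp; ring
    _ ≤ s * exp (d i / s) := by gcongr; exact add_one_le_exp _

lemma sum_inv_add_mul_le_sum_div (hs : 0 < s) (hd : ∀ i, 0 ≤ d i) {c : ι → ℝ}
    (hc : ∀ i, 0 ≤ c i) : ∑ i, (s + d i)⁻¹ * c i ≤ (∑ i, c i) / s := by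
  rw [Finset.sum_div]
  refine Finset.sum_le_sum fun i _ => ?_
  rw [div_eq_inv_mul]
  exact mul_le_mul_of_nonneg_right (inv_anti₀ hs (by linarith [hd i])) (hc i)

lemma sum_div_le_sum_inv_add_mul_add (hs : 0 < s) (hd : ∀ i, 0 ≤ d i) {c : ι → ℝ}
    (hc : ∀ i, 0 ≤ c i) :
    (∑ i, c i) / s ≤ ∑ i, (s + d i)⁻¹ * c i + (∑ i, d i) * (∑ i, c i) / s ^ 2 := by
  rw [Finset.mul_sum, Finset.sum_div, Finset.sum_div, ← Finset.sum_add_distrib]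
  refine Finset.sum_le_sum fun i _ => ?_
  have hdi : d i ≤ ∑ j, d j := Finset.single_le_sum (fun j _ => hd j) (Finset.mem_univ i)
  calc c i / s = (s + d i)⁻¹ * c i + (s⁻¹ - (s + d i)⁻¹) * c i := by ring
    _ ≤ (s + d i)⁻¹ * c i + d i / s ^ 2 * c i := by
        gcongr
        · exact hc i
        · exact inv_sub_inv_add_le hs (hd i)
    _ ≤ (s + d i)⁻¹ * c i + (∑ j, d j) * c i / s ^ 2 := by
        rw [div_mul_eq_mul_div]
        gcongr
        exact hc i

lemma abs_rpow_prod_mul_exp_sub_le {σ : ℝ} (hσ : 0 < σ) (hd : ∀ i, 0 ≤ d i) (c : ι → ℝ) :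
    |(∏ i, (σ ^ 2 + d i)) ^ (-(1 : ℝ) / 2) *
        exp (-(1 / 2) * ∑ i, (σ ^ 2 + d i)⁻¹ * c i ^ 2) -
      σ ^ (-(Fintype.card ι : ℝ)) * exp (-(∑ i, c i ^ 2) / (2 * σ ^ 2))| ≤
    σ ^ (-(Fintype.card ι : ℝ)) * ((∑ i, d i) / (2 * σ ^ 2)) *
      (1 + (∑ i, c i ^ 2) / σ ^ 2) := by
  have hs : 0 < σ ^ 2 := by positivity
  have hc : ∀ i, 0 ≤ c i ^ 2 := fun i => sq_nonneg _
  set m := σ ^ (-(Fintype.card ι : ℝ))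
  set P := ∏ i, (σ ^ 2 + d i)
  set T := ∑ i, d i
  set N := ∑ i, c i ^ 2
  set Q := ∑ i, (σ ^ 2 + d i)⁻¹ * c i ^ 2
  have hm : ((σ ^ 2) ^ Fintype.card ι) ^ (-(1 : ℝ) / 2) = m := by
    rw [← rpow_natCast, ← rpow_mul hs.le, mul_div_assoc', mul_neg_one, sq_rpow_div_two hσ.le]
  have hP_lower := pow_card_le_prod_add hs.le hd
  have hP : 0 < P := (pow_pos hs _).trans_le hP_lower
  have hp_le : P ^ (-(1 : ℝ) / 2) ≤ m :=
    hm ▸ rpow_le_rpow_of_nonpos (pow_pos hs _) hP_lower (by norm_num)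
  have hp_ge : m * (1 - T / (2 * σ ^ 2)) ≤ P ^ (-(1 : ℝ) / 2) := by
    have := mul_one_sub_half_le_rpow_neg_half (pow_pos hs _) hP (prod_add_le_pow_mul_exp hs hd)
    rwa [hm, div_div, mul_comm (σ ^ 2)] at this
  have hQ : 0 ≤ Q :=
    Finset.sum_nonneg fun i _ => mul_nonneg (inv_nonneg.2 (by linarith [hd i])) (hc i)
  have hQ_le : Q ≤ N / σ ^ 2 := sum_inv_add_mul_le_sum_div hs hd hc
  have hQ_ge := sum_div_le_sum_inv_add_mul_add hs hd hc
  have hTN : T / (2 * σ ^ 2) * (N / σ ^ 2) = T * N / (σ ^ 2) ^ 2 / 2 := by ring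
  have hexp : exp (-(Q / 2)) - exp (-(N / σ ^ 2 / 2)) ≤ T / (2 * σ ^ 2) * (N / σ ^ 2) :=
    (exp_neg_sub_exp_neg_le (by positivity) (by linarith)).trans (by linarith)
  rw [show -(1 / 2) * Q = -(Q / 2) by ring, show -N / (2 * σ ^ 2) = -(N / σ ^ 2 / 2) by ring]
  calc _ ≤ m * (T / (2 * σ ^ 2) + T / (2 * σ ^ 2) * (N / σ ^ 2)) :=
        abs_mul_sub_mul_le (by positivity) hp_ge hp_le (exp_pos _).le
          (exp_le_exp.2 (by linarith)) (exp_le_one_iff.2 (by linarith)) hexp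
    _ = _ := by ring

end

theorem stmt_8_general (n : ℕ) (σ : ℝ) (hσ : 0 < σ)
    (y μ : EuclideanSpace ℝ (Fin n))
    (C : Matrix (Fin n) (Fin n) ℝ) (hC : C.PosSemidef) :
    |(2 * Real.pi) ^ (-(n : ℝ) / 2) *
          ((σ ^ 2 • (1 : Matrix (Fin n) (Fin n) ℝ) + C).det) ^ (-(1 : ℝ) / 2) *
          Real.exp (-(1 / 2) *
            ((y - μ) ⬝ᵥ ((σ ^ 2 • (1 : Matrix (Fin n) (Fin n) ℝ) + C)⁻¹ *ᵥ (y - μ)))) -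
        (2 * Real.pi * σ ^ 2) ^ (-(n : ℝ) / 2) *
          Real.exp (-(‖y - μ‖ ^ 2) / (2 * σ ^ 2))| ≤
      (2 * Real.pi) ^ (-(n : ℝ) / 2) * σ ^ (-(n : ℝ)) * (C.trace / (2 * σ ^ 2)) *
        (1 + ‖y - μ‖ ^ 2 / σ ^ 2) := by
  have hd := hC.eigenvalues_nonneg
  have hne : ∀ i, σ ^ 2 + hC.1.eigenvalues i ≠ 0 := fun i => by have := hd i; positivity
  set c := star (hC.1.eigenvectorUnitary : Matrix (Fin n) (Fin n) ℝ) *ᵥ (y.ofLp - μ.ofLp)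
  have hnorm : ‖y - μ‖ ^ 2 = ∑ i, c i ^ 2 := by
    rw [EuclideanSpace.norm_sq_eq,
      sum_sq_mulVec_of_mem_unitaryGroup (Unitary.star_mem hC.1.eigenvectorUnitary.2)]
    simp
  have hprefactor :
      (2 * π * σ ^ 2) ^ (-(n : ℝ) / 2) = (2 * π) ^ (-(n : ℝ) / 2) * σ ^ (-(n : ℝ)) := by
    rw [mul_rpow (by positivity) (by positivity), sq_rpow_div_two hσ.le]
  rw [hC.1.det_smul_one_add_s8, WithLp.ofLp_sub, hC.1.dotProduct_inv_smul_one_add_mulVec hne, hnorm,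
    hC.1.trace_eq_sum_eigenvalues, hprefactor, mul_assoc, mul_assoc _ (σ ^ _), ← mul_sub, abs_mul,
    abs_of_pos (by positivity), mul_assoc _ (σ ^ _), mul_assoc]
  gcongr
  simpa using abs_rpow_prod_mul_exp_sub_le hσ hd c

theorem stmt_8 (n : ℕ) (hn : 1 ≤ n) (σ : ℝ) (hσ : 0 < σ)
    (y μ : EuclideanSpace ℝ (Fin n))
    (C : Matrix (Fin n) (Fin n) ℝ) (hC : C.PosSemidef) :
    |(2 * Real.pi) ^ (-(n : ℝ) / 2) *
          ((σ ^ 2 • (1 : Matrix (Fin n) (Fin n) ℝ) + C).det) ^ (-(1 : ℝ) / 2) *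
          Real.exp (-(1 / 2) *
            ((y - μ) ⬝ᵥ ((σ ^ 2 • (1 : Matrix (Fin n) (Fin n) ℝ) + C)⁻¹ *ᵥ (y - μ)))) -
        (2 * Real.pi * σ ^ 2) ^ (-(n : ℝ) / 2) *
          Real.exp (-(‖y - μ‖ ^ 2) / (2 * σ ^ 2))| ≤
      (2 * Real.pi) ^ (-(n : ℝ) / 2) * σ ^ (-(n : ℝ)) * (C.trace / (2 * σ ^ 2)) *
        (1 + ‖y - μ‖ ^ 2 / σ ^ 2) :=
  stmt_8_general n σ hσ y μ C hC
end

section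
/- Let d, n ∈ ℕ with n ≥ 1, σ > 0, ε ≥ 0, R ≥ 0. Let μ be a probability measure on ℝᵈ, let y ∈ ℝⁿ, let m : ℝᵈ → ℝⁿ be measurable, and let λ : ℝᵈ → (Fin n → ℝ) be measurable such that, for μ-almost every ψ and every i, 0 ≤ λ(ψ)ᵢ ≤ ε, and ‖y − m(ψ)‖ ≤ R. Define p̄_D = ∫ ∏ᵢ (2π(σ² + λ(ψ)ᵢ))^{−1/2} exp(−(yᵢ − m(ψ)ᵢ)²/(2(σ² + λ(ψ)ᵢ))) dμ(ψ) and p̃_D = ∫ (2πσ²)^{−n/2} exp(−‖y−m(ψ)‖²/(2σ²)) dμ(ψ). Then |p̄_D − p̃_D| ≤ (2π)^{−n/2} σ^{−n} · (n·ε/(2σ²)) · (1 + R²/σ²). -/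
/-!
Each factor of the integrand of `p̄_D` is a centred normal density of variance `σ² + λ(ψ)ᵢ`
evaluated at the residual `yᵢ - m(ψ)ᵢ`, and the integrand of `p̃_D` is the product of the same
densities at variance `σ²`. Raising the variance from `v` to `v + l` changes the normalising
constant by a relative amount at most `l / (2v)` (tangent-line bound for `t ↦ t^(-1/2)`) and the
exponential factor by at most `l a / (2v²)` (`exp` is 1-Lipschitz on `(-∞, 0]`). All factors are
bounded by `(2πσ²)^(-1/2)`, so telescoping bounds the difference of the two products by
`(2πσ²)^(-n/2)` times the sum of these relative errors. Every squared residual is at most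
`‖y - m(ψ)‖² ≤ R²`, and integrating the a.e. bound against the probability measure `μ` concludes.
-/

open Matrix Real MeasureTheory Finset

lemma norm_prod_le_pow_card {ι R : Type*} [NormedCommRing R] [NormOneClass R] (s : Finset ι)
    {f : ι → R} {A : ℝ} (hf : ∀ i ∈ s, ‖f i‖ ≤ A) : ‖∏ i ∈ s, f i‖ ≤ A ^ #s :=
  (Finset.norm_prod_le _ _).trans
    ((prod_le_prod (fun _ _ ↦ norm_nonneg _) hf).trans_eq (prod_const A))

lemma norm_prod_sub_prod_le {ι R : Type*} [NormedCommRing R] [NormOneClass R] (s : Finset ι)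
    {f g : ι → R} {δ : ι → ℝ} {A : ℝ} (hf : ∀ i ∈ s, ‖f i‖ ≤ A) (hg : ∀ i ∈ s, ‖g i‖ ≤ A)
    (hfg : ∀ i ∈ s, ‖f i - g i‖ ≤ A * δ i) :
    ‖∏ i ∈ s, f i - ∏ i ∈ s, g i‖ ≤ A ^ #s * ∑ i ∈ s, δ i := by
  classical
  induction s using Finset.induction_on with
  | empty => simp
  | insert a s ha ih =>
    simp only [forall_mem_insert] at hf hg hfg
    have hA : 0 ≤ A := (norm_nonneg _).trans hf.1
    have hQ := norm_prod_le_pow_card s hg.2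
    rw [prod_insert ha, prod_insert ha, sum_insert ha, card_insert_of_notMem ha,
      show f a * ∏ i ∈ s, f i - g a * ∏ i ∈ s, g i
        = f a * (∏ i ∈ s, f i - ∏ i ∈ s, g i) + (f a - g a) * ∏ i ∈ s, g i by ring]
    calc _ ≤ ‖f a‖ * ‖∏ i ∈ s, f i - ∏ i ∈ s, g i‖ + ‖f a - g a‖ * ‖∏ i ∈ s, g i‖ :=
          (norm_add_le _ _).trans (add_le_add (norm_mul_le _ _) (norm_mul_le _ _))
      _ ≤ A * (A ^ #s * ∑ i ∈ s, δ i) + A * δ a * A ^ #s := by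
          gcongr
          · exact hf.1
          · exact ih hf.2 hg.2 hfg.2
          · exact (norm_nonneg _).trans hfg.1
          · exact hfg.1
      _ = A ^ (#s + 1) * (δ a + ∑ i ∈ s, δ i) := by ring

/-- The centred normal density of variance `v`, as a function of the squared deviation `a`. -/
noncomputable def gaussDensity (v a : ℝ) : ℝ := (2 * π * v) ^ (-(1 : ℝ) / 2) * exp (-a / (2 * v))

lemma gaussDensity_nonneg {v : ℝ} (hv : 0 ≤ v) (a : ℝ) : 0 ≤ gaussDensity v a := by
  unfold gaussDensity; positivity

@[fun_prop]
lemma Measurable.gaussDensity {α : Type*} [MeasurableSpace α] {f g : α → ℝ} (hf : Measurable f)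
    (hg : Measurable g) : Measurable fun x ↦ _root_.gaussDensity (f x) (g x) := by
  unfold _root_.gaussDensity
  fun_prop

lemma norm_gaussDensity_le {v w a : ℝ} (hv : 0 < v) (hvw : v ≤ w) (ha : 0 ≤ a) :
    ‖gaussDensity w a‖ ≤ (2 * π * v) ^ (-(1 : ℝ) / 2) := by
  have hw : 0 < w := hv.trans_le hvw
  rw [norm_of_nonneg (gaussDensity_nonneg hw.le a)]
  calc gaussDensity w a ≤ (2 * π * w) ^ (-(1 : ℝ) / 2) * 1 :=
        mul_le_mul_of_nonneg_left
          (exp_le_one_iff.2 (div_nonpos_of_nonpos_of_nonneg (neg_nonpos.2 ha) (by positivity)))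
          (by positivity)
    _ ≤ (2 * π * v) ^ (-(1 : ℝ) / 2) := by
        rw [mul_one]
        exact rpow_le_rpow_of_nonpos (by positivity) (by gcongr) (by norm_num)

lemma rpow_neg_half_sub_rpow_neg_half_le {x h : ℝ} (hx : 0 < x) (hh : 0 ≤ h) :
    x ^ (-(1 : ℝ) / 2) - (x + h) ^ (-(1 : ℝ) / 2) ≤ x ^ (-(1 : ℝ) / 2) * (h / (2 * x)) := by
  have hxh : 0 < x + h := by linarith
  simp only [neg_div, rpow_neg hx.le, rpow_neg hxh.le, ← sqrt_eq_rpow]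
  obtain ⟨u, hu, rfl⟩ : ∃ u, 0 < u ∧ x = u ^ 2 := ⟨√x, sqrt_pos.2 hx, (sq_sqrt hx.le).symm⟩
  obtain ⟨w, hw, hwd⟩ : ∃ w, 0 < w ∧ u ^ 2 + h = w ^ 2 :=
    ⟨√(u ^ 2 + h), sqrt_pos.2 hxh, (sq_sqrt hxh.le).symm⟩
  rw [hwd, sqrt_sq hu.le, sqrt_sq hw.le]
  have huw : u ≤ w := by nlinarith
  rw [inv_sub_inv hu.ne' hw.ne', div_le_iff₀ (by positivity)]
  field_simp
  nlinarith [mul_nonneg (sub_nonneg.2 huw) (mul_nonneg hu.le (sub_nonneg.2 huw))]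

lemma rpow_neg_half_pow {x : ℝ} (hx : 0 ≤ x) (n : ℕ) :
    (x ^ (-(1 : ℝ) / 2)) ^ n = x ^ (-(n : ℝ) / 2) := by
  rw [← rpow_natCast, ← rpow_mul hx]
  ring_nf

lemma exp_sub_exp_le_of_nonpos {s t : ℝ} (hst : s ≤ t) (ht : t ≤ 0) :
    exp t - exp s ≤ t - s := by
  have h : exp t * (s - t + 1) ≤ exp s := by
    calc exp t * (s - t + 1) ≤ exp t * exp (s - t) := by gcongr; exact add_one_le_exp _
      _ = exp s := by rw [← exp_add, add_sub_cancel]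
  nlinarith [mul_nonneg (sub_nonneg.2 (exp_le_one_iff.2 ht)) (sub_nonneg.2 hst)]

lemma abs_gaussDensity_add_sub_le {v l a : ℝ} (hv : 0 < v) (hl : 0 ≤ l) (ha : 0 ≤ a) :
    |gaussDensity (v + l) a - gaussDensity v a| ≤
      (2 * π * v) ^ (-(1 : ℝ) / 2) * (l / (2 * v) * (1 + a / v)) := by
  set c₀ := (2 * π * v) ^ (-(1 : ℝ) / 2)
  set c₁ := (2 * π * (v + l)) ^ (-(1 : ℝ) / 2)
  set e₀ := exp (-a / (2 * v))
  set e₁ := exp (-a / (2 * (v + l)))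
  have hc : c₀ - c₁ ≤ c₀ * (l / (2 * v)) := by
    have := rpow_neg_half_sub_rpow_neg_half_le (x := 2 * π * v) (h := 2 * π * l)
      (by positivity) (by positivity)
    rwa [← mul_add, show 2 * π * l / (2 * (2 * π * v)) = l / (2 * v) by field_simp] at this
  have hexp : -a / (2 * v) ≤ -a / (2 * (v + l)) := by
    rw [neg_div, neg_div, neg_le_neg_iff]
    gcongr
    linarith
  have he : e₁ - e₀ ≤ l / (2 * v) * (a / v) := by
    calc e₁ - e₀ ≤ -a / (2 * (v + l)) - -a / (2 * v) :=
          exp_sub_exp_le_of_nonpos hexp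
            (div_nonpos_of_nonpos_of_nonneg (neg_nonpos.2 ha) (by positivity))
      _ ≤ l / (2 * v) * (a / v) := by
          field_simp
          nlinarith [mul_nonneg ha hl, mul_nonneg (mul_nonneg ha hl) hl]
  have hc₁₀ : c₁ ≤ c₀ :=
    rpow_le_rpow_of_nonpos (by positivity) (by gcongr; linarith) (by norm_num)
  have he₁ : e₁ ≤ 1 :=
    exp_le_one_iff.2 (div_nonpos_of_nonpos_of_nonneg (neg_nonpos.2 ha) (by positivity))
  have he₀₁ : e₀ ≤ e₁ := exp_le_exp.2 hexp
  show |c₁ * e₁ - c₀ * e₀| ≤ _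
  rw [show c₁ * e₁ - c₀ * e₀ = c₀ * (e₁ - e₀) - (c₀ - c₁) * e₁ by ring, abs_le]
  have hup := mul_le_mul_of_nonneg_left he (by positivity : 0 ≤ c₀)
  have hup₀ : 0 ≤ c₀ * (e₁ - e₀) := mul_nonneg (by positivity) (sub_nonneg.2 he₀₁)
  have hlow : (c₀ - c₁) * e₁ ≤ c₀ - c₁ := mul_le_of_le_one_right (sub_nonneg.2 hc₁₀) he₁
  have hlow₀ : 0 ≤ (c₀ - c₁) * e₁ := mul_nonneg (sub_nonneg.2 hc₁₀) (exp_pos _).le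
  constructor <;> linarith

lemma prod_gaussDensity {ι : Type*} (s : Finset ι) {v : ℝ} (hv : 0 ≤ v) (a : ι → ℝ) :
    ∏ i ∈ s, gaussDensity v (a i) =
      (2 * π * v) ^ (-(#s : ℝ) / 2) * exp (-(∑ i ∈ s, a i) / (2 * v)) := by
  simp only [gaussDensity, prod_mul_distrib, prod_const,
    rpow_neg_half_pow (by positivity : 0 ≤ 2 * π * v), ← exp_sum, ← sum_div, sum_neg_distrib]

lemma abs_prod_gaussDensity_add_sub_le {ι : Type*} (s : Finset ι) {v ε K : ℝ} (hv : 0 < v)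
    {l a : ι → ℝ} (hl : ∀ i ∈ s, 0 ≤ l i ∧ l i ≤ ε) (ha : ∀ i ∈ s, 0 ≤ a i ∧ a i ≤ K) :
    |∏ i ∈ s, gaussDensity (v + l i) (a i) - ∏ i ∈ s, gaussDensity v (a i)| ≤
      (2 * π * v) ^ (-(#s : ℝ) / 2) * (#s * ε / (2 * v)) * (1 + K / v) := by
  have key := norm_prod_sub_prod_le s (f := fun i ↦ gaussDensity (v + l i) (a i))
    (g := fun i ↦ gaussDensity v (a i)) (δ := fun _ ↦ ε / (2 * v) * (1 + K / v))
    (fun i hi ↦ norm_gaussDensity_le hv (le_add_of_nonneg_right (hl i hi).1) (ha i hi).1)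
    (fun i hi ↦ norm_gaussDensity_le hv le_rfl (ha i hi).1)
    (fun i hi ↦ by
      obtain ⟨hl₀, hlε⟩ := hl i hi
      obtain ⟨ha₀, haK⟩ := ha i hi
      have hε : 0 ≤ ε := hl₀.trans hlε
      rw [norm_eq_abs]
      refine (abs_gaussDensity_add_sub_le hv hl₀ ha₀).trans ?_
      gcongr)
  rw [norm_eq_abs, rpow_neg_half_pow (by positivity), sum_const, nsmul_eq_mul] at key
  convert key using 1
  ring

theorem stmt_10_general (d n : ℕ) (σ ε R : ℝ) (hσ : 0 < σ)
    (μ : Measure (Fin d → ℝ)) [IsProbabilityMeasure μ]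
    (y : EuclideanSpace ℝ (Fin n))
    (m : (Fin d → ℝ) → EuclideanSpace ℝ (Fin n)) (hm : Measurable m)
    (lam : (Fin d → ℝ) → (Fin n → ℝ)) (hlam : Measurable lam)
    (hb : ∀ᵐ ψ ∂μ, (∀ i, 0 ≤ lam ψ i ∧ lam ψ i ≤ ε) ∧ ‖y - m ψ‖ ≤ R) :
    |(∫ ψ, ∏ i, ((2 * Real.pi * (σ ^ 2 + lam ψ i)) ^ (-(1 : ℝ) / 2) *
            Real.exp (-(y i - m ψ i) ^ 2 / (2 * (σ ^ 2 + lam ψ i)))) ∂μ) -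
        (∫ ψ, (2 * Real.pi * σ ^ 2) ^ (-(n : ℝ) / 2) *
            Real.exp (-(‖y - m ψ‖ ^ 2) / (2 * σ ^ 2)) ∂μ)| ≤
      (2 * Real.pi) ^ (-(n : ℝ) / 2) * σ ^ (-(n : ℝ)) * (n * ε / (2 * σ ^ 2)) *
        (1 + R ^ 2 / σ ^ 2) := by
  have hv : 0 < σ ^ 2 := by positivity
  set F : (Fin d → ℝ) → ℝ := fun ψ ↦ ∏ i, gaussDensity (σ ^ 2 + lam ψ i) ((y i - m ψ i) ^ 2)
  set G : (Fin d → ℝ) → ℝ := fun ψ ↦ ∏ i, gaussDensity (σ ^ 2) ((y i - m ψ i) ^ 2)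
  have hG : ∀ ψ, (2 * π * σ ^ 2) ^ (-(n : ℝ) / 2) * exp (-(‖y - m ψ‖ ^ 2) / (2 * σ ^ 2)) = G ψ :=
    fun ψ ↦ by
      simp only [G, prod_gaussDensity _ hv.le, card_univ, Fintype.card_fin,
        EuclideanSpace.real_norm_sq_eq, PiLp.sub_apply]
  have hFG : ∀ᵐ ψ ∂μ, ‖F ψ - G ψ‖ ≤
      (2 * π * σ ^ 2) ^ (-(n : ℝ) / 2) * (n * ε / (2 * σ ^ 2)) * (1 + R ^ 2 / σ ^ 2) := by
    filter_upwards [hb] with ψ ⟨hl, hR⟩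
    have ha : ∀ i, (y i - m ψ i) ^ 2 ≤ R ^ 2 := fun i ↦
      sq_le_sq.2 (((PiLp.norm_apply_le (y - m ψ) i).trans hR).trans (le_abs_self R))
    simpa using abs_prod_gaussDensity_add_sub_le univ hv (fun i _ ↦ hl i)
      (fun i _ ↦ ⟨sq_nonneg _, ha i⟩)
  have hGi : Integrable G μ :=
    Integrable.of_bound (by fun_prop) _ (ae_of_all _ fun _ ↦
      norm_prod_le_pow_card _ fun _ _ ↦ norm_gaussDensity_le hv le_rfl (sq_nonneg _))
  have hFi : Integrable F μ :=
    ((Integrable.of_bound (by fun_prop) _ hFG).add hGi).congr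
      (ae_of_all _ fun _ ↦ sub_add_cancel _ _)
  rw [funext hG]
  change |∫ ψ, F ψ ∂μ - ∫ ψ, G ψ ∂μ| ≤ _
  rw [← integral_sub hFi hGi, ← norm_eq_abs]
  refine (norm_integral_le_of_norm_le_const hFG).trans_eq ?_
  rw [probReal_univ, mul_one, mul_rpow (by positivity) hv.le, ← rpow_natCast σ 2,
    ← rpow_mul hσ.le]
  ring_nf

theorem stmt_10 (d n : ℕ) (hn : 1 ≤ n) (σ ε R : ℝ) (hσ : 0 < σ) (hε : 0 ≤ ε) (hR : 0 ≤ R)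
    (μ : Measure (Fin d → ℝ)) [IsProbabilityMeasure μ]
    (y : EuclideanSpace ℝ (Fin n))
    (m : (Fin d → ℝ) → EuclideanSpace ℝ (Fin n)) (hm : Measurable m)
    (lam : (Fin d → ℝ) → (Fin n → ℝ)) (hlam : Measurable lam)
    (hb : ∀ᵐ ψ ∂μ, (∀ i, 0 ≤ lam ψ i ∧ lam ψ i ≤ ε) ∧ ‖y - m ψ‖ ≤ R) :
    |(∫ ψ, ∏ i, ((2 * Real.pi * (σ ^ 2 + lam ψ i)) ^ (-(1 : ℝ) / 2) *
            Real.exp (-(y i - m ψ i) ^ 2 / (2 * (σ ^ 2 + lam ψ i)))) ∂μ) -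
        (∫ ψ, (2 * Real.pi * σ ^ 2) ^ (-(n : ℝ) / 2) *
            Real.exp (-(‖y - m ψ‖ ^ 2) / (2 * σ ^ 2)) ∂μ)| ≤
      (2 * Real.pi) ^ (-(n : ℝ) / 2) * σ ^ (-(n : ℝ)) * (n * ε / (2 * σ ^ 2)) *
        (1 + R ^ 2 / σ ^ 2) :=
  stmt_10_general d n σ ε R hσ μ y m hm lam hlam hb
end
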